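/- arXiv:2212.04946 — 3 statements merged into one kernel-verified Lean document; each statement's English description precedes it below -/
import Mathlib

section
/- If f ∈ C*(g₁⊕g₂, g₁⊕g₂) has bidegree (−1)|k and g has bidegree (−1)|l, then [f,g]_NR = 0. Consequently ⊕_{l≥1} C^{−1|l}(g₁⊕g₂, g₁⊕g₂) is an abelian graded Lie subalgebra of (C*(g₁⊕g₂, g₁⊕g₂), [·,·]_NR). -/
open BigOperators

namespace RBPaper

/-- A permutation of `Fin n` is an `(i, n-i)`-shuffle if it is strictly increasing on the
first `i` indices and on the last `n - i` indices. -/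
def IsShuffle {n : ℕ} (i : ℕ) (σ : Equiv.Perm (Fin n)) : Prop :=
  (∀ a b : Fin n, a < b → (b : ℕ) < i → σ a < σ b) ∧
  (∀ a b : Fin n, a < b → i ≤ (a : ℕ) → σ a < σ b)

/-- `(a, b, n-a-b)`-shuffles. -/
def IsShuffle3 {n : ℕ} (a b : ℕ) (σ : Equiv.Perm (Fin n)) : Prop :=
  (∀ p q : Fin n, p < q → (q : ℕ) < a → σ p < σ q) ∧
  (∀ p q : Fin n, p < q → a ≤ (p : ℕ) → (q : ℕ) < a + b → σ p < σ q) ∧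
  (∀ p q : Fin n, p < q → a + b ≤ (p : ℕ) → σ p < σ q)

/-- The finite set of `(i, n-i)`-shuffles. -/
noncomputable def shuffles (i n : ℕ) : Finset (Equiv.Perm (Fin n)) :=
  letI := Classical.decPred fun σ : Equiv.Perm (Fin n) => IsShuffle i σ
  Finset.univ.filter fun σ => IsShuffle i σ

/-- The finite set of `(a, b, n-a-b)`-shuffles. -/
noncomputable def shuffles3 (a b n : ℕ) : Finset (Equiv.Perm (Fin n)) :=
  letI := Classical.decPred fun σ : Equiv.Perm (Fin n) => IsShuffle3 a b σ
  Finset.univ.filter fun σ => IsShuffle3 a b σ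

section NR

variable {W : Type*} [AddCommGroup W]

/-- The composition `P ∘̄ Q` entering the Nijenhuis-Richardson bracket. -/
noncomputable def nrComp (p q : ℕ) (P : (Fin (p + 1) → W) → W) (Q : (Fin (q + 1) → W) → W) :
    (Fin (p + q + 1) → W) → W := fun x =>
  ∑ σ ∈ shuffles (q + 1) (p + q + 1),
    ((Equiv.Perm.sign σ : ℤ)) •
      P (Fin.cons (Q fun i => x (σ (Fin.castLE (by omega : q + 1 ≤ p + q + 1) i)))
        fun i => x (σ (Fin.cast (by omega : q + 1 + p = p + q + 1) (Fin.natAdd (q + 1) i))))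

/-- The Nijenhuis-Richardson bracket `[P, Q]_NR = P ∘̄ Q - (-1)^{pq} Q ∘̄ P`. -/
noncomputable def nrBracket (p q : ℕ) (P : (Fin (p + 1) → W) → W) (Q : (Fin (q + 1) → W) → W) :
    (Fin (p + q + 1) → W) → W := fun x =>
  nrComp p q P Q x -
    ((-1 : ℤ) ^ (p * q)) •
      nrComp q p Q P fun i => x (Fin.cast (by omega : q + p + 1 = p + q + 1) i)

end NR

section Lift

variable {g V : Type*} [AddCommGroup g] [AddCommGroup V]

/-- The lift of a map `f : Λᵏ g ⊗ Λˡ V → g` to a cochain on `g ⊕ V`. -/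
noncomputable def liftG (k l : ℕ) (f : (Fin k → g) → (Fin l → V) → g) :
    (Fin (k + l) → g × V) → g × V := fun z =>
  (∑ τ ∈ shuffles k (k + l),
      ((Equiv.Perm.sign τ : ℤ)) •
        f (fun i => (z (τ (Fin.castAdd l i))).1) fun j => (z (τ (Fin.natAdd k j))).2, 0)

/-- The lift of a map `f : Λᵏ g ⊗ Λˡ V → V` to a cochain on `g ⊕ V`. -/
noncomputable def liftV (k l : ℕ) (f : (Fin k → g) → (Fin l → V) → V) :
    (Fin (k + l) → g × V) → g × V := fun z =>
  (0, ∑ τ ∈ shuffles k (k + l),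
      ((Equiv.Perm.sign τ : ℤ)) •
        f (fun i => (z (τ (Fin.castAdd l i))).1) fun j => (z (τ (Fin.natAdd k j))).2)

end Lift

section Bidegree

variable {g V : Type*} [Zero g] [Zero V]

/-- A cochain on `g ⊕ V` with `m` inputs has bidegree `k | l` (where `m = k + l + 1`) if on
pure tuples with `k+1` entries from `g` it takes values in `g`, on pure tuples with `k`
entries from `g` (and `l+1` from `V`) it takes values in `V`, and it vanishes on all other
pure tuples. -/
def HasBidegree (k l : ℤ) (m : ℕ) (f : (Fin m → g × V) → g × V) : Prop :=
  ∀ (z : Fin m → g × V) (S : Finset (Fin m)),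
    (∀ i ∈ S, (z i).2 = 0) → (∀ i ∉ S, (z i).1 = 0) →
      (((S.card : ℤ) = k + 1 → (f z).2 = 0) ∧
        ((S.card : ℤ) = k → (f z).1 = 0) ∧
        ((S.card : ℤ) ≠ k + 1 → (S.card : ℤ) ≠ k → f z = 0))

end Bidegree

section Ops

variable {K : Type*} [Field K] [CharZero K]
variable {g V : Type*} [AddCommGroup g] [Module K g] [AddCommGroup V] [Module K V]

/-- The lift `π = μ̂ + ρ̂` of a pair consisting of a bilinear skew bracket `μ` on `g` and a
bilinear map `ρ : g ⊗ V → V`. -/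
noncomputable def pihat (μ : AlternatingMap K g g (Fin 2)) (ρ : g →ₗ[K] V →ₗ[K] V) :
    (Fin 2 → g × V) → g × V := fun z =>
  liftG 2 0 (fun x _ => μ x) z + liftV 1 1 (fun x v => ρ (x 0) (v 0)) z

/-- The lift `T̂` of a linear map `T : V → g`. -/
noncomputable def Tha (T : V →ₗ[K] g) : (Fin 1 → g × V) → g × V :=
  liftG 0 1 fun _ v => T (v 0)

/-- Iterated Nijenhuis-Richardson bracket `[⋯[[F, T̂], T̂], ⋯, T̂]` with `n` copies of `T̂`. -/
noncomputable def adTiter (T : V →ₗ[K] g) (p : ℕ) :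
    ℕ → ((Fin (p + 1) → g × V) → g × V) → (Fin (p + 1) → g × V) → g × V
  | 0, F => F
  | n + 1, F => nrBracket p 0 (adTiter T p n F) (Tha T)

/-- `μ` satisfies the Jacobi identity, i.e. defines a Lie algebra structure on `g`. -/
def IsJacobi (μ : AlternatingMap K g g (Fin 2)) : Prop :=
  ∀ x y z : g, μ ![μ ![x, y], z] + μ ![μ ![y, z], x] + μ ![μ ![z, x], y] = 0

/-- `ρ` is a representation of the Lie algebra `(g, μ)` on `V`. -/
def IsRep (μ : AlternatingMap K g g (Fin 2)) (ρ : g →ₗ[K] V →ₗ[K] V) : Prop :=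
  ∀ (x y : g) (v : V), ρ (μ ![x, y]) v = ρ x (ρ y v) - ρ y (ρ x v)

/-- `T : V → g` is a relative Rota-Baxter operator, so `((g, μ), ρ, T)` is a relative
Rota-Baxter Lie algebra. -/
def IsRelRB (μ : AlternatingMap K g g (Fin 2)) (ρ : g →ₗ[K] V →ₗ[K] V) (T : V →ₗ[K] g) : Prop :=
  ∀ u v : V, μ ![T u, T v] = T (ρ (T u) v - ρ (T v) u)

/-- The coboundary `∂ f = (-1)^{n-1} [π, f̂]_NR` of the Lie-Rep pair `(g, μ; ρ)`, acting on a
(lifted) `n`-cochain with `n = m + 1` inputs. -/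
noncomputable def Dpartial (μ : AlternatingMap K g g (Fin 2)) (ρ : g →ₗ[K] V →ₗ[K] V)
    (m : ℕ) (F : (Fin (m + 1) → g × V) → g × V) : (Fin (m + 2) → g × V) → g × V := fun z =>
  ((-1 : ℤ) ^ m) •
    nrBracket 1 m (pihat μ ρ) F fun i => z (Fin.cast (by omega : 1 + m + 1 = m + 2) i)

/-- The coboundary `δ θ = (-1)^n [[π, T̂]_NR, θ̂]_NR` of the relative Rota-Baxter operator `T`,
acting on a (lifted) `n`-cochain `θ ∈ Hom(Λ^{n-1} V, g)` with `n - 1 = m + 1` inputs. -/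
noncomputable def Ddelta (μ : AlternatingMap K g g (Fin 2)) (ρ : g →ₗ[K] V →ₗ[K] V)
    (T : V →ₗ[K] g) (m : ℕ) (Θ : (Fin (m + 1) → g × V) → g × V) :
    (Fin (m + 2) → g × V) → g × V := fun z =>
  ((-1 : ℤ) ^ (m + 2)) •
    nrBracket 1 m (nrBracket 1 0 (pihat μ ρ) (Tha T)) Θ
      fun i => z (Fin.cast (by omega : 1 + m + 1 = m + 2) i)

/-- The operator `h_T f = (-1)^{n-2} (1/n!) [⋯[[f̂, T̂], T̂], ⋯, T̂]` (with `n` copies of `T̂`),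
acting on a (lifted) `n`-cochain with `n = m + 1` inputs. -/
noncomputable def hTop (T : V →ₗ[K] g) (m : ℕ) (F : (Fin (m + 1) → g × V) → g × V) :
    (Fin (m + 1) → g × V) → g × V := fun z =>
  (((-1 : K) ^ (m + 1)) / ((m + 1).factorial : K)) • adTiter T m (m + 1) F z

/-- The lift `f̂ = f̂_g + f̂_V` of a pair `(f_g, f_V) ∈ Hom(Λ^{m+1} g, g) ⊕ Hom(Λ^m g ⊗ V, V)`. -/
noncomputable def cochainLift (m : ℕ) (fg : (Fin (m + 1) → g) → g) (fV : (Fin m → g) → V → V) :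
    (Fin (m + 1) → g × V) → g × V := fun z =>
  liftG (m + 1) 0 (fun x _ => fg x) z + liftV m 1 (fun x v => fV x (v 0)) z

/-- The lift `θ̂` of `θ ∈ Hom(Λ^{m+1} V, g)`. -/
noncomputable def opLift (m : ℕ) (θ : (Fin (m + 1) → V) → g) : (Fin (m + 1) → g × V) → g × V :=
  fun z =>
    liftG 0 (m + 1) (fun _ v => θ v) fun i => z (Fin.cast (by omega : 0 + (m + 1) = m + 1) i)

/-- The Chevalley-Eilenberg coboundary `d_CE f = (-1)^{n-1} [μ, f]_NR` on `Hom(Λ^{m+1} g, g)`. -/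
noncomputable def dCE {h : Type*} [AddCommGroup h] (mu : (Fin 2 → h) → h) (m : ℕ)
    (f : (Fin (m + 1) → h) → h) : (Fin (m + 2) → h) → h := fun x =>
  ((-1 : ℤ) ^ m) • nrBracket 1 m mu f fun i => x (Fin.cast (by omega : 1 + m + 1 = m + 2) i)

/-- The operator `Ω` of a Rota-Baxter operator. -/
noncomputable def OmegaOp {h : Type*} [AddCommGroup h] (T : h → h) (n : ℕ)
    (f : (Fin n → h) → h) : (Fin n → h) → h := fun x =>
  ((-1 : ℤ) ^ n) •
    (f (fun i => T (x i)) - ∑ i : Fin n, T (f (Function.update (fun j => T (x j)) i (x i))))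

/-- The coboundary of the relative Rota-Baxter operator `T`, written on plain (unlifted)
cochains `Hom(Λ^{m+1} V, g) → Hom(Λ^{m+2} V, g)`. -/
noncomputable def deltaUn (μ : AlternatingMap K g g (Fin 2)) (ρ : g →ₗ[K] V →ₗ[K] V)
    (T : V →ₗ[K] g) (m : ℕ) (θ : (Fin (m + 1) → V) → g) : (Fin (m + 2) → V) → g := fun v =>
  (Ddelta μ ρ T m (opLift m θ) fun i => ((0 : g), v i)).1

end Ops

/-!
A cochain of bidegree `-1 | l` takes values in `g₁`, and, expanding it multilinearly over
tuples whose entries lie in `g₁` or in `g₂`, it vanishes as soon as one of its arguments lies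
in `g₁`. In every term of `F ∘̄ G` the first argument of `F` is a value of `G`, hence lies in
`g₁`, so `F ∘̄ G = 0`; symmetrically `G ∘̄ F = 0`, and the bracket vanishes.
-/
section NRVanishing

variable {W : Type*} [AddCommGroup W]

theorem nrComp_eq_zero {p q : ℕ} {P : (Fin (p + 1) → W) → W} {Q : (Fin (q + 1) → W) → W}
    (h : ∀ y x, P (Fin.cons (Q y) x) = 0) : nrComp p q P Q = 0 := by
  funext x
  exact Finset.sum_eq_zero fun σ _ => by rw [h, smul_zero]

theorem nrBracket_eq_zero {p q : ℕ} {P : (Fin (p + 1) → W) → W} {Q : (Fin (q + 1) → W) → W}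
    (hPQ : ∀ y x, P (Fin.cons (Q y) x) = 0) (hQP : ∀ y x, Q (Fin.cons (P y) x) = 0) :
    nrBracket p q P Q = 0 := by
  funext x
  simp only [nrBracket, nrComp_eq_zero hPQ, nrComp_eq_zero hQP, Pi.zero_apply, smul_zero,
    sub_zero]

end NRVanishing

theorem hasBidegree_zero {g V : Type*} [Zero g] [Zero V] (k l : ℤ) (m : ℕ) :
    HasBidegree k l m (0 : (Fin m → g × V) → g × V) := fun _ _ _ _ =>
  ⟨fun _ => rfl, fun _ => rfl, fun _ _ => rfl⟩

section PureTuple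

variable {R : Type*} [Semiring R] {g₁ g₂ : Type*}
  [AddCommMonoid g₁] [Module R g₁] [AddCommMonoid g₂] [Module R g₂]
  {m : ℕ} {l : ℤ} {f : MultilinearMap R (fun _ : Fin m => g₁ × g₂) (g₁ × g₂)}

def pureTuple (w : Fin m → g₁ × g₂) (S : Finset (Fin m)) : Fin m → g₁ × g₂ :=
  S.piecewise (fun i => ((w i).1, 0)) fun i => (0, (w i).2)

theorem map_eq_sum_pureTuple (w : Fin m → g₁ × g₂) :
    f w = ∑ S : Finset (Fin m), f (pureTuple w S) := by
  have hw : w = (fun i => ((w i).1, (0 : g₂))) + fun i => ((0 : g₁), (w i).2) := by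
    funext i
    simp
  conv_lhs => rw [hw]
  exact f.map_add_univ _ _

namespace HasBidegree

theorem apply_pureTuple (hf : HasBidegree (-1) l m f) (w : Fin m → g₁ × g₂)
    (S : Finset (Fin m)) :
    (S.card = 0 → (f (pureTuple w S)).2 = 0) ∧ (S.card ≠ 0 → f (pureTuple w S) = 0) := by
  have h := hf (pureTuple w S) S (fun i hi => by simp [pureTuple, hi])
    (fun i hi => by simp [pureTuple, hi])
  exact ⟨fun hS => h.1 (by simp [hS]), fun hS => h.2.2 (by omega) (by omega)⟩

theorem snd_eq_zero (hf : HasBidegree (-1) l m f) (w : Fin m → g₁ × g₂) : (f w).2 = 0 := by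
  rw [map_eq_sum_pureTuple w, Prod.snd_sum]
  refine Finset.sum_eq_zero fun S _ => ?_
  by_cases hS : S.card = 0
  · exact (hf.apply_pureTuple w S).1 hS
  · rw [(hf.apply_pureTuple w S).2 hS, Prod.snd_zero]

theorem eq_zero_of_snd_eq_zero (hf : HasBidegree (-1) l m f) {w : Fin m → g₁ × g₂} {i : Fin m}
    (hi : (w i).2 = 0) : f w = 0 := by
  rw [map_eq_sum_pureTuple w]
  refine Finset.sum_eq_zero fun S _ => ?_
  by_cases hiS : i ∈ S
  · exact (hf.apply_pureTuple w S).2 (Finset.card_ne_zero_of_mem hiS)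
  · exact f.map_coord_zero i (by simp [pureTuple, hiS, hi])

end HasBidegree

end PureTuple

theorem nrBracket_eq_zero_of_hasBidegree_neg_one_general
    {K : Type*} [Field K] {g₁ g₂ : Type*}
    [AddCommGroup g₁] [Module K g₁] [AddCommGroup g₂] [Module K g₂]
    (c d : ℕ)
    (F : AlternatingMap K (g₁ × g₂) (g₁ × g₂) (Fin (c + 1)))
    (G : AlternatingMap K (g₁ × g₂) (g₁ × g₂) (Fin (d + 1)))
    (hF : HasBidegree (-1) ((c : ℤ) + 1) (c + 1) ⇑F)
    (hG : HasBidegree (-1) ((d : ℤ) + 1) (d + 1) ⇑G) :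
    (∀ z : Fin (c + d + 1) → g₁ × g₂, nrBracket c d ⇑F ⇑G z = 0) ∧
      HasBidegree (-1) ((c : ℤ) + (d : ℤ) + 1) (c + d + 1) (nrBracket c d ⇑F ⇑G) := by
  replace hF : HasBidegree (-1) _ _ ⇑F.toMultilinearMap := hF
  replace hG : HasBidegree (-1) _ _ ⇑G.toMultilinearMap := hG
  have hFG : nrBracket c d ⇑F ⇑G = 0 :=
    nrBracket_eq_zero (fun _ _ => hF.eq_zero_of_snd_eq_zero (i := 0) (hG.snd_eq_zero _))
      (fun _ _ => hG.eq_zero_of_snd_eq_zero (i := 0) (hF.snd_eq_zero _))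
  exact ⟨fun z => congrFun hFG z, hFG ▸ hasBidegree_zero _ _ _⟩

/-- If `f` has bidegree `-1 | k` and `g` has bidegree `-1 | l`, then
`[f, g]_NR = 0`; consequently `⊕_{l ≥ 1} C^{-1|l}(g₁ ⊕ g₂, g₁ ⊕ g₂)` is an abelian graded Lie
subalgebra of `(C*(g₁ ⊕ g₂, g₁ ⊕ g₂), [·,·]_NR)`. -/
theorem nrBracket_eq_zero_of_hasBidegree_neg_one
    {K : Type*} [Field K] [CharZero K] {g₁ g₂ : Type*}
    [AddCommGroup g₁] [Module K g₁] [AddCommGroup g₂] [Module K g₂]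
    (c d : ℕ)
    (F : AlternatingMap K (g₁ × g₂) (g₁ × g₂) (Fin (c + 1)))
    (G : AlternatingMap K (g₁ × g₂) (g₁ × g₂) (Fin (d + 1)))
    (hF : HasBidegree (-1) ((c : ℤ) + 1) (c + 1) ⇑F)
    (hG : HasBidegree (-1) ((d : ℤ) + 1) (d + 1) ⇑G) :
    (∀ z : Fin (c + d + 1) → g₁ × g₂, nrBracket c d ⇑F ⇑G z = 0) ∧
      HasBidegree (-1) ((c : ℤ) + (d : ℤ) + 1) (c + d + 1) (nrBracket c d ⇑F ⇑G) :=
  nrBracket_eq_zero_of_hasBidegree_neg_one_general c d F G hF hG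

end RBPaper
end

section
/- Let g and V be vector spaces, μ ∈ Hom(Λ²g, g), ρ ∈ Hom(g⊗V, V) and T ∈ Hom(V, g), and set π := μ̂ + ρ̂. Then ((g,μ), ρ, T) is a relative Rota–Baxter Lie algebra if and only if [π,π]_NR = 0 and [[π, T̂]_NR, T̂]_NR = 0. (This is the content of the characterization of relative Rota–Baxter Lie algebras as Maurer–Cartan elements of the L∞-algebra obtained from the V-data construction.) -/
open BigOperators

namespace RBPaper

/-! In the degrees occurring here the Nijenhuis–Richardson brackets can be evaluated by hand:
`[π, π]_NR = 2 • (π ∘̄ π)`, where the `g`-component of `π ∘̄ π` is the Jacobiator of `μ` and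
its `V`-component is a sum of defects of `ρ` being a representation, while `[[π, T̂]_NR, T̂]_NR`
is twice `(μ (Tu, Tv) - T (ρ(Tu)v - ρ(Tv)u), 0)`. In characteristic zero the factor `2`
cancels, and evaluating on tuples of pure elements of `g` or `V` recovers each identity. -/

lemma two_nsmul_eq_zero_iff (K : Type*) [Field K] [CharZero K] {M : Type*} [AddCommGroup M]
    [Module K M] {x : M} : 2 • x = 0 ↔ x = 0 := by
  rw [← Nat.cast_smul_eq_nsmul K, smul_eq_zero]
  simp

section AlternatingFinTwo

variable {R M N : Type*} [CommRing R] [AddCommGroup M] [Module R M] [AddCommGroup N] [Module R N]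
  (μ : M [⋀^Fin 2]→ₗ[R] N)

lemma _root_.AlternatingMap.map_fin_two_swap (a b : M) : μ ![a, b] = -μ ![b, a] := by
  simpa using μ.map_swap ![b, a] zero_ne_one

lemma _root_.AlternatingMap.map_fin_two_neg_left (a b : M) : μ ![-a, b] = -μ ![a, b] := by
  simp [← AlternatingMap.curryLeft_apply_apply]

lemma _root_.AlternatingMap.map_fin_two_zero_left (b : M) : μ ![0, b] = 0 := by
  simp [← AlternatingMap.curryLeft_apply_apply]

end AlternatingFinTwo

instance {n i : ℕ} (σ : Equiv.Perm (Fin n)) : Decidable (IsShuffle i σ) := by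
  unfold IsShuffle; infer_instance

lemma mem_shuffles {n i : ℕ} {σ : Equiv.Perm (Fin n)} : σ ∈ shuffles i n ↔ IsShuffle i σ := by
  simp [shuffles]

lemma shuffles_zero_one : shuffles 0 1 = {1} := by
  ext σ; rw [mem_shuffles]; revert σ; decide

lemma shuffles_one_two : shuffles 1 2 = {1, Equiv.swap 0 1} := by
  ext σ; rw [mem_shuffles]; revert σ; decide

lemma shuffles_two_two : shuffles 2 2 = {1} := by
  ext σ; rw [mem_shuffles]; revert σ; decide

lemma shuffles_two_three : shuffles 2 3 = {1, Equiv.swap 1 2, finRotate 3} := by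
  ext σ; rw [mem_shuffles]; revert σ; decide

section NRLowDegree

variable {W : Type*} [AddCommGroup W]

lemma nrComp_one_one_apply (P Q : (Fin 2 → W) → W) (z : Fin 3 → W) :
    nrComp 1 1 P Q z
      = P ![Q ![z 0, z 1], z 2] - P ![Q ![z 0, z 2], z 1] + P ![Q ![z 1, z 2], z 0] := by
  have hsum : nrComp 1 1 P Q z = ∑ σ ∈ shuffles 2 3,
      (Equiv.Perm.sign σ : ℤ) • P ![Q ![z (σ 0), z (σ 1)], z (σ 2)] := by
    refine Finset.sum_congr rfl fun σ _ => congrArg _ (congrArg P ?_)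
    ext j; fin_cases j
    · exact congrArg Q (by ext i; fin_cases i <;> rfl)
    · rfl
  rw [hsum, shuffles_two_three, Finset.sum_insert (by decide), Finset.sum_insert (by decide),
    Finset.sum_singleton]
  simp [Equiv.swap_apply_of_ne_of_ne, sub_eq_add_neg, add_assoc]

lemma nrComp_one_zero_apply (P : (Fin 2 → W) → W) (Q : (Fin 1 → W) → W) (z : Fin 2 → W) :
    nrComp 1 0 P Q z = P ![Q ![z 0], z 1] - P ![Q ![z 1], z 0] := by
  have hsum : nrComp 1 0 P Q z = ∑ σ ∈ shuffles 1 2,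
      (Equiv.Perm.sign σ : ℤ) • P ![Q ![z (σ 0)], z (σ 1)] := by
    refine Finset.sum_congr rfl fun σ _ => congrArg _ (congrArg P ?_)
    ext j; fin_cases j
    · exact congrArg Q (by ext i; fin_cases i; rfl)
    · rfl
  rw [hsum, shuffles_one_two, Finset.sum_insert (by decide), Finset.sum_singleton]
  simp [sub_eq_add_neg]

lemma nrComp_zero_one_apply (Q : (Fin 1 → W) → W) (P : (Fin 2 → W) → W) (z : Fin 2 → W) :
    nrComp 0 1 Q P z = Q ![P ![z 0, z 1]] := by
  simp only [nrComp, Nat.reduceAdd, shuffles_two_two, Finset.sum_singleton,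
    Equiv.Perm.sign_one, Units.val_one, one_smul]
  exact congrArg Q (by ext j; fin_cases j; exact congrArg P (by ext i; fin_cases i <;> rfl))

lemma nrBracket_one_one_apply (P Q : (Fin 2 → W) → W) (z : Fin 3 → W) :
    nrBracket 1 1 P Q z = nrComp 1 1 P Q z + nrComp 1 1 Q P z := by
  simp [nrBracket, sub_eq_add_neg]

lemma nrBracket_one_zero_apply (P : (Fin 2 → W) → W) (Q : (Fin 1 → W) → W) (z : Fin 2 → W) :
    nrBracket 1 0 P Q z = nrComp 1 0 P Q z - nrComp 0 1 Q P z := by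
  simp [nrBracket]

end NRLowDegree

section LieRep

variable {K : Type*} [Field K]
variable {g V : Type*} [AddCommGroup g] [Module K g] [AddCommGroup V] [Module K V]

lemma pihat_apply (μ : AlternatingMap K g g (Fin 2)) (ρ : g →ₗ[K] V →ₗ[K] V)
    (z : Fin 2 → g × V) :
    pihat μ ρ z = (μ ![(z 0).1, (z 1).1], ρ (z 0).1 (z 1).2 - ρ (z 1).1 (z 0).2) := by
  simp only [pihat, liftG, liftV, Nat.reduceAdd, shuffles_one_two, shuffles_two_two]
  refine Prod.ext ?_ ?_
  · simp only [Finset.sum_singleton, Equiv.Perm.sign_one, Units.val_one, Equiv.Perm.coe_one,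
      id_eq, one_smul, Prod.mk_add_mk, add_zero]
    exact congrArg μ (by ext i; fin_cases i <;> rfl)
  · simp [Finset.sum_pair (show (1 : Equiv.Perm (Fin 2)) ≠ Equiv.swap 0 1 by decide),
      sub_eq_add_neg]

lemma Tha_apply (T : V →ₗ[K] g) (z : Fin 1 → g × V) : Tha T z = (T (z 0).2, 0) := by
  simp [Tha, liftG, shuffles_zero_one]

lemma isJacobi_iff (μ : AlternatingMap K g g (Fin 2)) :
    IsJacobi μ ↔ ∀ x y w, μ ![μ ![x, y], w] - μ ![μ ![x, w], y] + μ ![μ ![y, w], x] = 0 := by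
  refine forall₃_congr fun x y w => ?_
  rw [μ.map_fin_two_swap w x, μ.map_fin_two_neg_left]
  constructor <;> intro h <;> rw [← h] <;> abel

lemma nrComp_pihat_pihat_apply (μ : AlternatingMap K g g (Fin 2)) (ρ : g →ₗ[K] V →ₗ[K] V)
    (z : Fin 3 → g × V) :
    nrComp 1 1 (pihat μ ρ) (pihat μ ρ) z =
      (μ ![μ ![(z 0).1, (z 1).1], (z 2).1] - μ ![μ ![(z 0).1, (z 2).1], (z 1).1]
          + μ ![μ ![(z 1).1, (z 2).1], (z 0).1],
        (ρ (μ ![(z 0).1, (z 1).1]) (z 2).2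
            - ρ (z 2).1 (ρ (z 0).1 (z 1).2 - ρ (z 1).1 (z 0).2))
          - (ρ (μ ![(z 0).1, (z 2).1]) (z 1).2
            - ρ (z 1).1 (ρ (z 0).1 (z 2).2 - ρ (z 2).1 (z 0).2))
          + (ρ (μ ![(z 1).1, (z 2).1]) (z 0).2
            - ρ (z 0).1 (ρ (z 1).1 (z 2).2 - ρ (z 2).1 (z 1).2))) := by
  simp only [nrComp_one_one_apply, pihat_apply, Matrix.cons_val_zero, Matrix.cons_val_one,
    Prod.mk_sub_mk, Prod.mk_add_mk]

lemma nrBracket_pihat_Tha_apply (μ : AlternatingMap K g g (Fin 2)) (ρ : g →ₗ[K] V →ₗ[K] V)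
    (T : V →ₗ[K] g) (z : Fin 2 → g × V) :
    nrBracket 1 0 (pihat μ ρ) (Tha T) z
      = (μ ![T (z 0).2, (z 1).1] - μ ![T (z 1).2, (z 0).1]
            - T (ρ (z 0).1 (z 1).2) + T (ρ (z 1).1 (z 0).2),
          ρ (T (z 0).2) (z 1).2 - ρ (T (z 1).2) (z 0).2) := by
  simp only [nrBracket_one_zero_apply, nrComp_one_zero_apply, nrComp_zero_one_apply, Tha_apply,
    pihat_apply, Matrix.cons_val_fin_one, Matrix.cons_val_zero, Matrix.cons_val_one, map_zero,
    map_sub, sub_zero, Prod.mk_sub_mk, Prod.mk.injEq, and_true]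
  abel

lemma nrBracket_nrBracket_pihat_Tha_Tha_apply (μ : AlternatingMap K g g (Fin 2))
    (ρ : g →ₗ[K] V →ₗ[K] V) (T : V →ₗ[K] g) (z : Fin 2 → g × V) :
    nrBracket 1 0 (nrBracket 1 0 (pihat μ ρ) (Tha T)) (Tha T) z
      = (2 • (μ ![T (z 0).2, T (z 1).2] - T (ρ (T (z 0).2) (z 1).2 - ρ (T (z 1).2) (z 0).2)),
          0) := by
  rw [nrBracket_one_zero_apply, nrComp_one_zero_apply, nrComp_zero_one_apply]
  simp only [nrBracket_pihat_Tha_apply, Tha_apply, Matrix.cons_val_fin_one, Matrix.cons_val_zero,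
    Matrix.cons_val_one, μ.map_fin_two_zero_left, μ.map_fin_two_swap (T (z 1).2), map_zero,
    map_sub, LinearMap.zero_apply, sub_neg_eq_add, sub_self, zero_sub, zero_add,
    add_zero, Prod.mk_sub_mk, Prod.mk.injEq, and_true]
  abel

variable [CharZero K]

lemma isJacobi_and_isRep_iff (μ : AlternatingMap K g g (Fin 2)) (ρ : g →ₗ[K] V →ₗ[K] V) :
    IsJacobi μ ∧ IsRep μ ρ ↔ ∀ z, nrBracket 1 1 (pihat μ ρ) (pihat μ ρ) z = 0 := by
  simp only [nrBracket_one_one_apply, ← two_nsmul, two_nsmul_eq_zero_iff K,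
    nrComp_pihat_pihat_apply, Prod.mk_eq_zero, isJacobi_iff, IsRep]
  constructor
  · rintro ⟨hJ, hR⟩ z
    refine ⟨hJ _ _ _, ?_⟩
    simp only [hR, map_sub]
    abel
  · intro h
    refine ⟨fun x y w => (h ![(x, 0), (y, 0), (w, 0)]).1, fun x y v => ?_⟩
    have hv := (h ![(x, 0), (y, 0), (0, v)]).2
    simp only [Matrix.cons_val_zero, Matrix.cons_val_one, Matrix.cons_val, map_zero, sub_self,
      sub_zero, zero_sub, sub_neg_eq_add] at hv
    rw [← sub_eq_zero, ← hv]
    abel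

lemma isRelRB_iff (μ : AlternatingMap K g g (Fin 2)) (ρ : g →ₗ[K] V →ₗ[K] V) (T : V →ₗ[K] g) :
    IsRelRB μ ρ T ↔ ∀ z, nrBracket 1 0 (nrBracket 1 0 (pihat μ ρ) (Tha T)) (Tha T) z = 0 := by
  simp only [nrBracket_nrBracket_pihat_Tha_Tha_apply, Prod.mk_eq_zero, two_nsmul_eq_zero_iff K,
    and_true, sub_eq_zero]
  exact ⟨fun h z => h _ _, fun h u v => h ![(0, u), (0, v)]⟩

end LieRep

/-- `((g, μ), ρ, T)` is a relative Rota-Baxter Lie algebra if and only if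
`[π, π]_NR = 0` and `[[π, T̂]_NR, T̂]_NR = 0`, i.e. `(s⁻¹π, T)` is a Maurer-Cartan element of
the `L∞`-algebra obtained from the V-data construction. -/
theorem relRB_iff_maurerCartan
    {K : Type*} [Field K] [CharZero K] {g V : Type*}
    [AddCommGroup g] [Module K g] [AddCommGroup V] [Module K V]
    (μ : AlternatingMap K g g (Fin 2)) (ρ : g →ₗ[K] V →ₗ[K] V) (T : V →ₗ[K] g) :
    (IsJacobi μ ∧ IsRep μ ρ ∧ IsRelRB μ ρ T) ↔
      ((∀ z : Fin 3 → g × V, nrBracket 1 1 (pihat μ ρ) (pihat μ ρ) z = 0) ∧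
        (∀ z : Fin 2 → g × V,
          nrBracket 1 0 (nrBracket 1 0 (pihat μ ρ) (Tha T)) (Tha T) z = 0)) := by
  rw [← and_assoc, isJacobi_and_isRep_iff, isRelRB_iff]

end RBPaper
end

section
/- Let φ: g → Der(h) be an action of a Lie algebra (g,[·,·]_g) on a Lie algebra (h,[·,·]_h), and let T: h → g be a relative Rota–Baxter operator of weight 1, i.e., [Tu, Tv]_g = T(φ(Tu)v − φ(Tv)u + [u,v]_h) for all u,v ∈ h. Then: (i) [u,v]_T := φ(Tu)v − φ(Tv)u + [u,v]_h defines a Lie algebra structure on h; (ii) the map θ: h → gl(g) defined by θ(u)x := T(φ(x)u) + [T(u), x]_g is a representation of the Lie algebra (h, [·,·]_T) on the vector space g. -/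
/-!
`T` intertwines the brackets: the Rota–Baxter identity says exactly `T [u, v]_T = [Tu, Tv]`.
Expanding `[[u, v]_T, w]_T` with this, with `φ [x, y] = [φ x, φ y]` and with the Leibniz rule
for the derivations `φ x`, the cyclic sum collapses to the Jacobi identity of `h`. Likewise,
rewriting `[Tu, T (φ x v)]` by the Rota–Baxter identity turns `θ(u) θ(v) x - θ(v) θ(u) x` into
`θ([u, v]_T) x`. Conceptually, the graph of `T` is a Lie subalgebra of `g ⋉_φ h`, and `θ` is its
adjoint action on the quotient `(g ⋉_φ h) / graph T ≅ g`.
-/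

open BigOperators

namespace RBPaper

section DescendedBracket

variable {R : Type*} [CommRing R]
variable {g : Type*} [LieRing g] [LieAlgebra R g] {h : Type*} [LieRing h] [LieAlgebra R h]
variable (φ : g →ₗ⁅R⁆ LieDerivation R h h) (T : h →ₗ[R] g)

/-- The bracket `[u, v]_T` on `h` induced by a relative Rota-Baxter operator of weight `1`. -/
def descendedBracket (u v : h) : h :=
  φ (T u) v - φ (T v) u + ⁅u, v⁆

/-- The action `θ(u) x` of `(h, [·,·]_T)` on `g`. -/
def descendedAction (u : h) (x : g) : g :=
  T (φ x u) + ⁅T u, x⁆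

lemma action_lie_apply (x y : g) (w : h) : φ ⁅x, y⁆ w = φ x (φ y w) - φ y (φ x w) := by
  rw [LieHom.map_lie, LieDerivation.commutator_apply]

lemma descendedBracket_self (u : h) : descendedBracket φ T u u = 0 := by
  simp [descendedBracket]

variable {φ T}

lemma descendedBracket_descendedBracket
    (hT : ∀ u v : h, ⁅T u, T v⁆ = T (descendedBracket φ T u v)) (u v w : h) :
    descendedBracket φ T (descendedBracket φ T u v) w =
      (φ (T u) (φ (T v) w) - φ (T v) (φ (T u) w)) - (φ (T w) (φ (T u) v) - φ (T w) (φ (T v) u))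
        - ⁅φ (T w) u, v⁆ - ⁅u, φ (T w) v⁆ + ⁅φ (T u) v, w⁆ - ⁅φ (T v) u, w⁆ + ⁅⁅u, v⁆, w⁆ := by
  rw [descendedBracket, ← hT, action_lie_apply, descendedBracket, map_add, map_sub,
    LieDerivation.apply_lie_eq_add, add_lie, sub_lie]
  abel

lemma descendedBracket_jacobi
    (hT : ∀ u v : h, ⁅T u, T v⁆ = T (descendedBracket φ T u v)) (u v w : h) :
    descendedBracket φ T (descendedBracket φ T u v) w +
        descendedBracket φ T (descendedBracket φ T v w) u +
        descendedBracket φ T (descendedBracket φ T w u) v = 0 := by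
  rw [descendedBracket_descendedBracket hT, descendedBracket_descendedBracket hT,
    descendedBracket_descendedBracket hT]
  linear_combination (norm := abel) -lie_jacobi w u v - lie_skew ⁅u, v⁆ w -
    lie_skew ⁅v, w⁆ u - lie_skew ⁅w, u⁆ v + lie_skew (φ (T w) v) u + lie_skew (φ (T u) w) v +
    lie_skew (φ (T v) u) w

lemma descendedAction_descendedAction
    (hT : ∀ u v : h, ⁅T u, T v⁆ = T (descendedBracket φ T u v)) (u v : h) (x : g) :
    descendedAction φ T u (descendedAction φ T v x) =
      T (φ ⁅T v, x⁆ u + φ (T u) (φ x v) + ⁅u, φ x v⁆) + ⁅T u, ⁅T v, x⁆⁆ := by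
  rw [descendedAction, descendedAction, map_add φ, LieDerivation.add_apply, lie_add,
    hT u (φ x v), descendedBracket, map_add, map_add, map_add, map_add, map_sub]
  abel

lemma descendedAction_descendedBracket
    (hT : ∀ u v : h, ⁅T u, T v⁆ = T (descendedBracket φ T u v)) (u v : h) (x : g) :
    descendedAction φ T (descendedBracket φ T u v) x =
      descendedAction φ T u (descendedAction φ T v x) -
        descendedAction φ T v (descendedAction φ T u x) := by
  rw [descendedAction_descendedAction hT, descendedAction_descendedAction hT, descendedAction,
    ← hT, lie_lie, descendedBracket, action_lie_apply, action_lie_apply, ← lie_skew v (φ x u)]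
  simp only [map_add, map_sub, map_neg, LieDerivation.apply_lie_eq_add]
  abel

end DescendedBracket

theorem weight_one_descended_bracket_and_representation_general
    {K : Type*} [Field K]
    {gL : Type*} [LieRing gL] [LieAlgebra K gL]
    {hL : Type*} [LieRing hL] [LieAlgebra K hL]
    (φ : gL →ₗ⁅K⁆ LieDerivation K hL hL) (T : hL →ₗ[K] gL)
    (hT : ∀ u v : hL, ⁅T u, T v⁆ = T (φ (T u) v - φ (T v) u + ⁅u, v⁆)) :
    (∀ u : hL, φ (T u) u - φ (T u) u + ⁅u, u⁆ = 0) ∧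
    (∀ u v w : hL,
        (φ (T (φ (T u) v - φ (T v) u + ⁅u, v⁆)) w -
            φ (T w) (φ (T u) v - φ (T v) u + ⁅u, v⁆) +
            ⁅φ (T u) v - φ (T v) u + ⁅u, v⁆, w⁆) +
          (φ (T (φ (T v) w - φ (T w) v + ⁅v, w⁆)) u -
            φ (T u) (φ (T v) w - φ (T w) v + ⁅v, w⁆) +
            ⁅φ (T v) w - φ (T w) v + ⁅v, w⁆, u⁆) +
          (φ (T (φ (T w) u - φ (T u) w + ⁅w, u⁆)) v -
            φ (T v) (φ (T w) u - φ (T u) w + ⁅w, u⁆) +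
            ⁅φ (T w) u - φ (T u) w + ⁅w, u⁆, v⁆) = 0) ∧
    (∀ (u v : hL) (x : gL),
        T (φ x (φ (T u) v - φ (T v) u + ⁅u, v⁆)) +
            ⁅T (φ (T u) v - φ (T v) u + ⁅u, v⁆), x⁆ =
          (T (φ (T (φ x v) + ⁅T v, x⁆) u) + ⁅T u, T (φ x v) + ⁅T v, x⁆⁆) -
            (T (φ (T (φ x u) + ⁅T u, x⁆) v) + ⁅T v, T (φ x u) + ⁅T u, x⁆⁆)) :=
  ⟨descendedBracket_self φ T, descendedBracket_jacobi hT, descendedAction_descendedBracket hT⟩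

/-- Let `φ : g → Der(h)` be an action and `T : h → g` a relative Rota-Baxter
operator of weight `1`.  Then (i) `[u, v]_T = φ(Tu)v - φ(Tv)u + [u, v]_h` defines a Lie
algebra structure on `h`, and (ii) `θ(u)x = T(φ(x)u) + [Tu, x]_g` defines a representation
of `(h, [·,·]_T)` on the vector space `g`. -/
theorem weight_one_descended_bracket_and_representation
    {K : Type*} [Field K] [CharZero K]
    {gL : Type*} [LieRing gL] [LieAlgebra K gL]
    {hL : Type*} [LieRing hL] [LieAlgebra K hL]
    (φ : gL →ₗ⁅K⁆ LieDerivation K hL hL) (T : hL →ₗ[K] gL)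
    (hT : ∀ u v : hL, ⁅T u, T v⁆ = T (φ (T u) v - φ (T v) u + ⁅u, v⁆)) :
    (∀ u : hL, φ (T u) u - φ (T u) u + ⁅u, u⁆ = 0) ∧
    (∀ u v w : hL,
        (φ (T (φ (T u) v - φ (T v) u + ⁅u, v⁆)) w -
            φ (T w) (φ (T u) v - φ (T v) u + ⁅u, v⁆) +
            ⁅φ (T u) v - φ (T v) u + ⁅u, v⁆, w⁆) +
          (φ (T (φ (T v) w - φ (T w) v + ⁅v, w⁆)) u -
            φ (T u) (φ (T v) w - φ (T w) v + ⁅v, w⁆) +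
            ⁅φ (T v) w - φ (T w) v + ⁅v, w⁆, u⁆) +
          (φ (T (φ (T w) u - φ (T u) w + ⁅w, u⁆)) v -
            φ (T v) (φ (T w) u - φ (T u) w + ⁅w, u⁆) +
            ⁅φ (T w) u - φ (T u) w + ⁅w, u⁆, v⁆) = 0) ∧
    (∀ (u v : hL) (x : gL),
        T (φ x (φ (T u) v - φ (T v) u + ⁅u, v⁆)) +
            ⁅T (φ (T u) v - φ (T v) u + ⁅u, v⁆), x⁆ =
          (T (φ (T (φ x v) + ⁅T v, x⁆) u) + ⁅T u, T (φ x v) + ⁅T v, x⁆⁆) -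
            (T (φ (T (φ x u) + ⁅T u, x⁆) v) + ⁅T v, T (φ x u) + ⁅T u, x⁆⁆)) :=
  weight_one_descended_bracket_and_representation_general φ T hT

end RBPaper
end
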